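/- Let s be a real number with 0 < |s| < 1 and let T be a tree with maximum degree Δ(T) = 3 that contains the starlike tree T_{1,4,4} as a subgraph. Then ρ(M_T(s)) > (1 + |s|)². -/

import Mathlib

open Filter Topology

/-- The deformed Laplacian matrix `M_G(s) = I - s·A + s²·(D - I)` of a finite simple graph. -/
noncomputable def defLap {V : Type*} [Fintype V] [DecidableEq V] (G : SimpleGraph V) (s : ℝ) :
    Matrix V V ℝ :=
  letI := Classical.decRel G.Adj
  (1 : Matrix V V ℝ) - s • (G.adjMatrix ℝ) +
    s ^ 2 • (Matrix.diagonal (fun v => (G.degree v : ℝ)) - 1)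

/-- The largest (real) eigenvalue of a matrix. -/
noncomputable def lamMax {V : Type*} [Fintype V] (M : Matrix V V ℝ) : ℝ :=
  sSup {μ : ℝ | ∃ v : V → ℝ, v ≠ 0 ∧ M.mulVec v = μ • v}

/-- The spectral radius of a real matrix: the supremum of the absolute values of its
(real) eigenvalues. -/
noncomputable def specRad {V : Type*} [Fintype V] (M : Matrix V V ℝ) : ℝ :=
  sSup {x : ℝ | ∃ μ : ℝ, (∃ v : V → ℝ, v ≠ 0 ∧ M.mulVec v = μ • v) ∧ x = |μ|}

/-- The maximum degree of a finite simple graph. -/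
noncomputable def maxDeg {V : Type*} [Fintype V] (G : SimpleGraph V) : ℕ :=
  letI := Classical.decRel G.Adj
  G.maxDegree

/-- The starlike tree `T_{1,n,n}`: vertex `0` is the center, vertex `1` is a pendant vertex,
vertices `2,…,n+1` and `n+2,…,2n+1` form two pendant paths on `n` vertices each. -/
def T1nn (n : ℕ) : SimpleGraph (Fin (2 * n + 2)) :=
  SimpleGraph.fromRel (fun i j =>
    ((i : ℕ) = 0 ∧ (j : ℕ) = 1) ∨
    ((i : ℕ) = 0 ∧ (j : ℕ) = 2) ∨
    ((i : ℕ) = 0 ∧ (j : ℕ) = n + 2) ∨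
    (2 ≤ (i : ℕ) ∧ (i : ℕ) < n + 1 ∧ (j : ℕ) = (i : ℕ) + 1) ∨
    (n + 2 ≤ (i : ℕ) ∧ (i : ℕ) < 2 * n + 1 ∧ (j : ℕ) = (i : ℕ) + 1))

/-!
`ρ(M_T(s))` dominates the Rayleigh quotient of every nonzero vector. Since `T` is a tree and
`T_{1,4,4}` is connected, the copy of `T_{1,4,4}` in `T` is an induced subgraph, so on vectors
supported on it the quadratic forms of `M_T(s)` and `M_{T_{1,4,4}}(s)` differ only through the
diagonal `s²(deg - 1)`, which can only grow. On `T_{1,4,4}` take the vector with value `20` at the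
centre, `10` at the pendant vertex and `16, 12, 8, 4` along each arm, multiplied by `-sign s` at
odd distance from the centre so that every edge contributes `+|s|`: its squared norm is `1460`
and its quadratic form is `1460 + 1728 s² + 2960 |s| > 1460 (1 + |s|)²`.
-/

open Matrix

theorem mem_spectrum_iff_exists_mulVec_eq_smul {V : Type*} [Fintype V] [DecidableEq V]
    (M : Matrix V V ℝ) (μ : ℝ) :
    μ ∈ spectrum ℝ M ↔ ∃ v : V → ℝ, v ≠ 0 ∧ M *ᵥ v = μ • v := by
  rw [spectrum.mem_iff, Matrix.isUnit_iff_isUnit_det, isUnit_iff_ne_zero, not_not,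
    ← Matrix.exists_mulVec_eq_zero_iff]
  simp [Algebra.algebraMap_eq_smul_one, sub_mulVec, smul_mulVec, sub_eq_zero, eq_comm]

theorem lamMax_eq_sSup_spectrum {V : Type*} [Fintype V] [DecidableEq V] (M : Matrix V V ℝ) :
    lamMax M = sSup (spectrum ℝ M) :=
  congr_arg sSup <| Set.ext fun μ => (mem_spectrum_iff_exists_mulVec_eq_smul M μ).symm

theorem dotProduct_mulVec_le_lamMax {V : Type*} [Fintype V] [DecidableEq V]
    {M : Matrix V V ℝ} (hM : M.IsHermitian) (x : V → ℝ) :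
    x ⬝ᵥ (M *ᵥ x) ≤ lamMax M * (x ⬝ᵥ x) := by
  have hpsd : (algebraMap ℝ _ (lamMax M) - M).PosSemidef := by
    refine posSemidef_iff_isHermitian_and_spectrum_nonneg.mpr ⟨?_, ?_⟩
    · exact (isHermitian_diagonal _).sub hM
    · rw [← spectrum.singleton_sub_eq]
      rintro _ ⟨_, rfl, μ, hμ, rfl⟩
      rw [lamMax_eq_sSup_spectrum]
      exact sub_nonneg.mpr (le_csSup (finite_real_spectrum (A := M)).bddAbove hμ)
  have := hpsd.dotProduct_mulVec_nonneg x
  simpa [Algebra.algebraMap_eq_smul_one, sub_mulVec, smul_mulVec, dotProduct_sub,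
    dotProduct_smul, mul_comm] using this

namespace SimpleGraph

variable {V : Type*} {G : SimpleGraph V}

theorem reachable_of_forall_exists_adj_lt [Preorder V] [WellFoundedLT V] (r : V)
    (h : ∀ v ≠ r, ∃ w < v, G.Adj v w) (v : V) : G.Reachable r v := by
  induction v using WellFoundedLT.induction with
  | _ v ih =>
    by_cases hv : v = r
    · subst hv
      rfl
    · obtain ⟨w, hwv, hadj⟩ := h v hv
      exact (ih w hwv).trans hadj.symm.reachable

theorem connected_of_forall_exists_adj_lt [Preorder V] [WellFoundedLT V] (r : V)
    (h : ∀ v ≠ r, ∃ w < v, G.Adj v w) : G.Connected :=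
  have := reachable_of_forall_exists_adj_lt r h
  { preconnected := fun u v => (this u).symm.trans (this v)
    nonempty := ⟨r⟩ }

theorem Copy.adj_iff_of_isAcyclic {W : Type*} {H : SimpleGraph W} (f : Copy H G)
    (hH : H.Connected) (hG : G.IsAcyclic) {a b : W} : G.Adj (f a) (f b) ↔ H.Adj a b := by
  refine ⟨fun h => ?_, f.toHom.map_adj⟩
  -- every edge of an acyclic graph is a bridge, so the image of a walk from `a` to `b` crosses it
  obtain ⟨w⟩ := hH.preconnected a b
  have hmem := isBridge_iff_forall_walk_mem_edges.mp (isAcyclic_iff_forall_adj_isBridge.mp hG h)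
    (w.map f.toHom)
  obtain ⟨e, he, hfe⟩ := List.mem_map.mp (Walk.edges_map f.toHom w ▸ hmem)
  rw [← Sym2.map_mk] at hfe
  exact w.adj_of_mem_edges (Sym2.map.injective f.injective hfe ▸ he)

theorem adjMatrix_submatrix {W V R : Type*} [Zero R] [One R] {H : SimpleGraph W}
    {G : SimpleGraph V} [DecidableRel H.Adj] [DecidableRel G.Adj] {f : W → V}
    (hf : ∀ a b, G.Adj (f a) (f b) ↔ H.Adj a b) :
    (G.adjMatrix R).submatrix f f = H.adjMatrix R := by
  ext a b
  simp [hf]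

end SimpleGraph

section extend

open Function

variable {W V R : Type*} [Fintype W] [Fintype V] {f : W → V}

theorem Function.Injective.sum_comp_extend_zero {M : Type*} [AddCommMonoid M] [Zero R]
    (hf : Injective f) (y : W → R) (g : V → R → M) (hg : ∀ v, g v 0 = 0) :
    ∑ v, g v (extend f y 0 v) = ∑ a, g (f a) (y a) := by
  classical
  calc ∑ v, g v (extend f y 0 v) = ∑ v ∈ Finset.univ.map ⟨f, hf⟩, g v (extend f y 0 v) := by
        refine (Finset.sum_subset (Finset.subset_univ _) fun v _ hv => ?_).symm
        rw [extend_apply' _ _ _ fun ⟨a, ha⟩ => hv (by simp [← ha]), Pi.zero_apply, hg]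
    _ = ∑ a, g (f a) (y a) := by simp [hf.extend_apply]

variable [CommSemiring R]

theorem Function.Injective.extend_zero_dotProduct_extend_zero (hf : Injective f) (y : W → R) :
    extend f y 0 ⬝ᵥ extend f y 0 = y ⬝ᵥ y :=
  hf.sum_comp_extend_zero y (fun _ r => r * r) fun _ => zero_mul 0

theorem Function.Injective.extend_zero_dotProduct_mulVec (hf : Injective f) (M : Matrix V V R)
    (y : W → R) :
    extend f y 0 ⬝ᵥ (M *ᵥ extend f y 0) = y ⬝ᵥ (M.submatrix f f *ᵥ y) := by
  simp only [dotProduct, mulVec]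
  rw [hf.sum_comp_extend_zero y (fun v r => r * ∑ w, M v w * extend f y 0 w) fun _ => zero_mul _]
  refine Finset.sum_congr rfl fun a _ => ?_
  rw [hf.sum_comp_extend_zero y (fun w r => M (f a) w * r) fun _ => mul_zero _]
  rfl

end extend

theorem defLap_eq {V : Type*} [Fintype V] [DecidableEq V] (G : SimpleGraph V) [DecidableRel G.Adj]
    (s : ℝ) :
    defLap G s = diagonal (fun v => 1 + s ^ 2 * ((G.degree v : ℝ) - 1)) - s • G.adjMatrix ℝ := by
  obtain rfl : ‹DecidableRel G.Adj› = Classical.decRel G.Adj := Subsingleton.elim _ _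
  ext u v
  rcases eq_or_ne u v with rfl | h
  · simp [defLap]
  · simp [defLap, h]

theorem isHermitian_defLap {V : Type*} [Fintype V] [DecidableEq V] (G : SimpleGraph V) (s : ℝ) :
    (defLap G s).IsHermitian := by
  classical
  rw [defLap_eq]
  exact (isHermitian_diagonal _).sub ((isHermitian_iff_isSymm.mpr G.isSymm_adjMatrix).smul rfl)

theorem dotProduct_defLap_mulVec {V : Type*} [Fintype V] [DecidableEq V] (G : SimpleGraph V)
    [DecidableRel G.Adj] (s : ℝ) (x : V → ℝ) :
    x ⬝ᵥ (defLap G s *ᵥ x) =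
      ∑ v, (1 + s ^ 2 * ((G.degree v : ℝ) - 1)) * x v ^ 2 - s * (x ⬝ᵥ (G.adjMatrix ℝ *ᵥ x)) := by
  rw [defLap_eq, sub_mulVec, dotProduct_sub, smul_mulVec, dotProduct_smul, smul_eq_mul]
  simp [dotProduct, mulVec_diagonal, sq, mul_left_comm]

theorem SimpleGraph.Copy.dotProduct_defLap_mulVec_le {W V : Type*} [Fintype W] [DecidableEq W]
    [Fintype V] [DecidableEq V] {H : SimpleGraph W} {G : SimpleGraph V} (f : H.Copy G)
    (hf : ∀ a b, G.Adj (f a) (f b) ↔ H.Adj a b) (s : ℝ) (y : W → ℝ) :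
    y ⬝ᵥ (defLap H s *ᵥ y) ≤ Function.extend f y 0 ⬝ᵥ (defLap G s *ᵥ Function.extend f y 0) := by
  classical
  have hinj : Function.Injective f := f.injective
  rw [dotProduct_defLap_mulVec, dotProduct_defLap_mulVec, hinj.extend_zero_dotProduct_mulVec,
    SimpleGraph.adjMatrix_submatrix hf,
    hinj.sum_comp_extend_zero y (fun v r => (1 + s ^ 2 * ((G.degree v : ℝ) - 1)) * r ^ 2)
      fun _ => by simp]
  gcongr with a
  exact_mod_cast f.degree_le a

instance (n : ℕ) : DecidableRel (T1nn n).Adj := fun _ _ =>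
  decidable_of_iff _ (SimpleGraph.fromRel_adj _ _ _).symm

theorem T1nn_connected (n : ℕ) : (T1nn n).Connected := by
  refine SimpleGraph.connected_of_forall_exists_adj_lt 0 fun i hi => ?_
  have hi₀ : (i : ℕ) ≠ 0 := Fin.val_ne_iff.mpr hi
  by_cases hroot : (i : ℕ) = 1 ∨ (i : ℕ) = 2 ∨ (i : ℕ) = n + 2
  · refine ⟨0, Fin.pos_iff_ne_zero.mpr hi, ?_⟩
    rw [T1nn, SimpleGraph.fromRel_adj]
    simp only [ne_eq, Fin.ext_iff, Fin.coe_ofNat_eq_mod, Nat.zero_mod, true_and]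
    omega
  · refine ⟨⟨i - 1, by omega⟩, Fin.lt_def.mpr (by simp only; omega), ?_⟩
    rw [T1nn, SimpleGraph.fromRel_adj]
    simp only [ne_eq, Fin.ext_iff]
    omega

theorem T1nn_four_degree : ∀ a : Fin 10, (T1nn 4).degree a = ![3, 1, 2, 2, 2, 1, 2, 2, 2, 1] a := by
  decide

def testVec (c : ℝ) : Fin 10 → ℝ := ![20, 10 * c, 16 * c, 12, 8 * c, 4, 16 * c, 12, 8 * c, 4]

theorem testVec_dotProduct_self {c : ℝ} (hc : c ^ 2 = 1) : testVec c ⬝ᵥ testVec c = 1460 := by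
  simp only [dotProduct, testVec, Fin.sum_univ_succ, Fin.isValue, cons_val_zero, cons_val_succ,
    Finset.univ_unique, Fin.default_eq_zero, cons_val_fin_one, Finset.sum_const,
    Finset.card_singleton, one_smul]
  linear_combination 740 * hc

theorem testVec_dotProduct_adjMatrix_mulVec (c : ℝ) :
    testVec c ⬝ᵥ ((T1nn 4).adjMatrix ℝ *ᵥ testVec c) = 2960 * c := by
  simp +decide only [dotProduct, mulVec, Fin.sum_univ_succ, Fin.sum_univ_zero,
    SimpleGraph.adjMatrix_apply, testVec, cons_val_zero, cons_val_succ, ite_true, ite_false]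
  ring

theorem testVec_dotProduct_defLap_mulVec (s : ℝ) {c : ℝ} (hc : c ^ 2 = 1) :
    testVec c ⬝ᵥ (defLap (T1nn 4) s *ᵥ testVec c) = 1460 + 1728 * s ^ 2 - 2960 * (s * c) := by
  rw [dotProduct_defLap_mulVec, testVec_dotProduct_adjMatrix_mulVec]
  simp only [T1nn_four_degree, testVec, Fin.sum_univ_succ, Fin.isValue, cons_val_zero,
    Nat.cast_ofNat, cons_val_succ, Nat.cast_one, sub_self, mul_zero, add_zero, one_mul,
    Finset.univ_unique, Fin.default_eq_zero, cons_val_fin_one, Finset.sum_const,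
    Finset.card_singleton, one_smul]
  linear_combination (740 + 640 * s ^ 2) * hc

theorem stmt12_general {V : Type*} [Fintype V] [DecidableEq V] (T : SimpleGraph V)
    (hT : T.IsTree) (s : ℝ) (hs0 : 0 < |s|)
    (hsub : ∃ f : Fin (2 * 4 + 2) ↪ V, ∀ a b, (T1nn 4).Adj a b → T.Adj (f a) (f b)) :
    (1 + |s|) ^ 2 < lamMax (defLap T s) := by
  obtain ⟨f, hf⟩ := hsub
  let F : (T1nn 4).Copy T := ⟨⟨f, hf _ _⟩, f.injective⟩
  set c := -(s / |s|)
  have hc : c ^ 2 = 1 := by rw [neg_sq, div_pow, sq_abs, div_self (pow_ne_zero 2 (abs_pos.mp hs0))]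
  have hsc : s * c = -|s| := by
    rw [mul_neg, mul_div_assoc', ← abs_mul_abs_self s, mul_self_div_self]
  set x := Function.extend f (testVec c) 0
  have hquad : testVec c ⬝ᵥ (defLap (T1nn 4) s *ᵥ testVec c) ≤ x ⬝ᵥ (defLap T s *ᵥ x) :=
    F.dotProduct_defLap_mulVec_le
      (fun _ _ => F.adj_iff_of_isAcyclic (T1nn_connected 4) hT.isAcyclic) s (testVec c)
  rw [testVec_dotProduct_defLap_mulVec s hc, hsc] at hquad
  refine lt_of_mul_lt_mul_right ?_ (by norm_num : (0 : ℝ) ≤ 1460)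
  calc (1 + |s|) ^ 2 * 1460 < 1460 + 1728 * s ^ 2 - 2960 * -|s| := by
        nlinarith [sq_abs s]
    _ ≤ x ⬝ᵥ (defLap T s *ᵥ x) := hquad
    _ ≤ lamMax (defLap T s) * (x ⬝ᵥ x) := dotProduct_mulVec_le_lamMax (isHermitian_defLap T s) x
    _ = lamMax (defLap T s) * 1460 := by
        rw [f.injective.extend_zero_dotProduct_extend_zero, testVec_dotProduct_self hc]

/-- for a real `s` with `0 < |s| < 1` and a tree `T` with maximum degree
`Δ(T) = 3` containing the starlike tree `T_{1,4,4}` as a subgraph,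
one has `ρ(M_T(s)) > (1 + |s|)²`. -/
theorem stmt12 {V : Type*} [Fintype V] [DecidableEq V] (T : SimpleGraph V)
    (hT : T.IsTree) (s : ℝ) (hs0 : 0 < |s|) (hs1 : |s| < 1) (hdeg : maxDeg T = 3)
    (hsub : ∃ f : Fin (2 * 4 + 2) ↪ V, ∀ a b, (T1nn 4).Adj a b → T.Adj (f a) (f b)) :
    (1 + |s|) ^ 2 < lamMax (defLap T s) :=
  stmt12_general T hT s hs0 hsub
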